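/- arXiv:1707.07787 — 10 statements merged into one kernel-verified Lean document; each statement's English description precedes it below -/
import Mathlib

section
/- For every y ∈ ℝ^m and p > 0, ψ_γ(y) = min over v ∈ ℝ^m of (‖v‖₀ + γ‖y − v‖_p^p), where ‖z‖_p^p = Σ_i |z_i|^p; in particular the minimum is attained. -/
open Filter Topology

noncomputable def l2 {n : ℕ} (x : Fin n → ℝ) : ℝ := Real.sqrt (∑ i, (x i)^2)

noncomputable def l0 {m : ℕ} (y : Fin m → ℝ) : ℕ :=
  (Finset.univ.filter fun i => y i ≠ 0).card

/-! The objective is separable: `‖v‖₀ + γ‖y − v‖_p^p = ∑ᵢ ([vᵢ ≠ 0] + γ|yᵢ − vᵢ|^p)`, so it is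
minimised coordinatewise. In one coordinate, either `vᵢ = 0` at cost `γ|yᵢ|^p`, or `vᵢ ≠ 0` at
cost at least `1`, attained by `vᵢ = yᵢ`; the minimum is `min (γ|yᵢ|^p) 1`. -/

theorem isLeast_range_sum {ι α M : Type*} [Fintype ι] [AddCommMonoid M] [PartialOrder M]
    [IsOrderedAddMonoid M] {f : ι → α → M} {c : ι → M} (h : ∀ i, IsLeast (Set.range (f i)) (c i)) :
    IsLeast (Set.range fun v : ι → α => ∑ i, f i (v i)) (∑ i, c i) := by
  choose a ha using fun i => (h i).1
  refine ⟨⟨a, by simp only [ha]⟩, ?_⟩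
  rintro _ ⟨v, rfl⟩
  exact Finset.sum_le_sum fun i _ => (h i).2 ⟨v i, rfl⟩

theorem l0_eq_sum {m : ℕ} (v : Fin m → ℝ) :
    (l0 v : ℝ) = ∑ i, if v i = 0 then 0 else 1 := by
  simp [l0, Finset.card_filter, ite_not]

theorem isLeast_range_indicator_add_rpow {γ p : ℝ} (hγ : 0 ≤ γ) (hp : 0 < p) (a : ℝ) :
    IsLeast (Set.range fun b : ℝ => (if b = 0 then 0 else 1) + γ * |a - b| ^ p)
      (min (γ * |a| ^ p) 1) := by
  constructor
  · rcases le_total (γ * |a| ^ p) 1 with hsmall | hlarge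
    · exact ⟨0, by simp [hsmall]⟩
    · have ha : a ≠ 0 := by
        rintro rfl
        norm_num [Real.zero_rpow hp.ne'] at hlarge
      exact ⟨a, by simp [ha, Real.zero_rpow hp.ne', hlarge]⟩
  · rintro _ ⟨b, rfl⟩
    by_cases hb : b = 0
    · simp [hb]
    · have : 0 ≤ γ * |a - b| ^ p := by positivity
      simp only [hb, if_false]
      linarith [min_le_right (γ * |a| ^ p) 1]

/-- `ψ_γ(y)` equals the minimum over `v ∈ ℝ^m` of `‖v‖₀ + γ‖y − v‖_p^p`, attained. -/
theorem capped_lp_split (m : ℕ) (γ p : ℝ) (hγ : 0 < γ) (hp : 0 < p) (y : Fin m → ℝ) :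
    IsLeast {r : ℝ | ∃ v : Fin m → ℝ, r = (l0 v : ℝ) + γ * ∑ i, |y i - v i| ^ p}
      (∑ i, min (γ * |y i| ^ p) 1) := by
  have hsplit : {r : ℝ | ∃ v : Fin m → ℝ, r = (l0 v : ℝ) + γ * ∑ i, |y i - v i| ^ p} =
      Set.range fun v : Fin m → ℝ =>
        ∑ i, ((if v i = 0 then 0 else 1) + γ * |y i - v i| ^ p) := by
    ext r
    simp only [Set.mem_ofPred_eq, Set.mem_range, l0_eq_sum, Finset.sum_add_distrib,
      Finset.mul_sum, eq_comm]
  rw [hsplit]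
  exact isLeast_range_sum fun i => isLeast_range_indicator_add_rpow hγ.le hp (y i)
end

section
/- Let A be a t × n real matrix, b ∈ ℝ^t, and k a nonnegative integer. Then the set O = {x ∈ ℝ^n : ‖Ax − b‖₀ ≤ k} is either empty or asymptotically linear. -/
/-!
The sublevel set is the preimage of `{y | ‖y‖₀ ≤ k}` under the affine map `x ↦ Ax - b`, and `‖·‖₀`
is lower semicontinuous, so it is closed. If `x_j` runs to infinity in the direction `x̄`, then
`(A x_j)_i ≈ ‖x_j‖ (A x̄)_i` is eventually different from `b_i` whenever `(A x̄)_i ≠ 0`. So for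
large `j` every zero entry of `A x_j - b` sits where `A x̄` vanishes, and subtracting `ρ x̄` keeps it
zero: the support of the residual does not grow.
-/

open Filter Topology

/-- A nonempty closed set `C` is asymptotically linear. -/
def AsympLinear {n : ℕ} (C : Set (Fin n → ℝ)) : Prop :=
  C.Nonempty ∧ IsClosed C ∧
  ∀ ρ : ℝ, 0 < ρ → ∀ (x : ℕ → Fin n → ℝ) (xb : Fin n → ℝ),
    (∀ k, x k ∈ C) →
    Tendsto (fun k => l2 (x k)) atTop atTop →
    Tendsto (fun k => (l2 (x k))⁻¹ • x k) atTop (𝓝 xb) →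
    ∃ k0 : ℕ, ∀ k ≥ k0, x k - ρ • xb ∈ C

open Matrix

lemma l0_le_l0_of_support_subset {m : ℕ} {y z : Fin m → ℝ}
    (h : Function.support z ⊆ Function.support y) : l0 z ≤ l0 y :=
  Finset.card_le_card fun i hi => by
    simp only [Finset.mem_filter, Finset.mem_univ, true_and] at hi ⊢
    exact h hi

lemma l0_eq_sum_indicator {m : ℕ} (y : Fin m → ℝ) :
    l0 y = ∑ i, {z : Fin m → ℝ | z i ≠ 0}.indicator (fun _ => 1) y := by
  simp only [l0, Finset.card_filter, Set.indicator_apply, Set.mem_ofPred_eq]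

lemma lowerSemicontinuous_l0 (m : ℕ) : LowerSemicontinuous (l0 : (Fin m → ℝ) → ℕ) := by
  simp_rw [funext l0_eq_sum_indicator]
  refine lowerSemicontinuous_sum fun i _ => IsOpen.lowerSemicontinuous_indicator ?_ zero_le_one
  exact isOpen_ne_fun (continuous_apply i) continuous_const

lemma isClosed_setOf_l0_le (m k : ℕ) : IsClosed {y : Fin m → ℝ | l0 y ≤ k} :=
  (lowerSemicontinuous_l0 m).isClosed_preimage k

lemma tendsto_abs_apply_atTop_of_tendsto_inv_smul {ι E : Type*} [AddCommGroup E] [Module ℝ E]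
    [TopologicalSpace E] {l : Filter ι} (f : E →L[ℝ] ℝ) {x : ι → E} {r : ι → ℝ} {xb : E}
    (hr : Tendsto r l atTop) (hx : Tendsto (fun j => (r j)⁻¹ • x j) l (𝓝 xb)) (hf : f xb ≠ 0) :
    Tendsto (fun j => |f (x j)|) l atTop := by
  have hlim : Tendsto (fun j => r j * |f ((r j)⁻¹ • x j)|) l atTop :=
    hr.atTop_mul_pos (abs_pos.2 hf) ((f.continuous.tendsto xb).comp hx).abs
  refine hlim.congr' ?_
  filter_upwards [hr.eventually_gt_atTop 0] with j hj
  rw [map_smul, smul_eq_mul, abs_mul, abs_inv, abs_of_pos hj, mul_inv_cancel_left₀ hj.ne']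

lemma eventually_l0_mulVec_sub_smul_le {t n : ℕ} (A : Matrix (Fin t) (Fin n) ℝ) (b : Fin t → ℝ)
    {x : ℕ → Fin n → ℝ} {r : ℕ → ℝ} {xb : Fin n → ℝ} (hr : Tendsto r atTop atTop)
    (hx : Tendsto (fun j => (r j)⁻¹ • x j) atTop (𝓝 xb)) (ρ : ℝ) :
    ∀ᶠ j in atTop, l0 (A *ᵥ (x j - ρ • xb) - b) ≤ l0 (A *ᵥ x j - b) := by
  have hres : ∀ᶠ j in atTop, ∀ i, (A *ᵥ xb) i ≠ 0 → (A *ᵥ x j - b) i ≠ 0 := by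
    refine eventually_all.2 fun i => ?_
    by_cases hi : (A *ᵥ xb) i = 0
    · exact Eventually.of_forall fun _ h => absurd hi h
    let f : (Fin n → ℝ) →L[ℝ] ℝ :=
      (ContinuousLinearMap.proj i).comp (LinearMap.toContinuousLinearMap A.mulVecLin)
    filter_upwards [(tendsto_abs_apply_atTop_of_tendsto_inv_smul f hr hx hi).eventually_gt_atTop
      |b i|] with j hj _ hzero
    rw [Pi.sub_apply, sub_eq_zero] at hzero
    exact hj.ne' (congrArg abs hzero)
  filter_upwards [hres] with j hj
  refine l0_le_l0_of_support_subset fun i hi hzero => hi ?_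
  have hxb : (A *ᵥ xb) i = 0 := not_not.1 fun h => hj i h hzero
  have hshift : (A *ᵥ (x j - ρ • xb) - b) i = (A *ᵥ x j - b) i - ρ * (A *ᵥ xb) i := by
    simp only [mulVec_sub, mulVec_smul, Pi.sub_apply, Pi.smul_apply, smul_eq_mul]
    ring
  rw [hshift, hzero, hxb, mul_zero, sub_zero]

/-- `{x : ‖Ax − b‖₀ ≤ k}` is either empty or asymptotically linear. -/
theorem l0_sublevel_asympLinear (t n : ℕ) (A : Matrix (Fin t) (Fin n) ℝ)
    (b : Fin t → ℝ) (k : ℕ) :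
    {x : Fin n → ℝ | l0 (A.mulVec x - b) ≤ k} = ∅ ∨
      AsympLinear {x : Fin n → ℝ | l0 (A.mulVec x - b) ≤ k} := by
  refine (Set.eq_empty_or_nonempty _).imp_right fun hne => ⟨hne, ?_, ?_⟩
  · exact (isClosed_setOf_l0_le t k).preimage
      ((LinearMap.continuous_of_finiteDimensional A.mulVecLin).sub continuous_const)
  · intro ρ _ x xb hxC hl2 hdir
    obtain ⟨k0, hk0⟩ := eventually_atTop.1 (eventually_l0_mulVec_sub_smul_le A b hl2 hdir ρ)
    exact ⟨k0, fun j hj => (hk0 j hj).trans (hxC j)⟩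
end

section
/- Let C₁ ⊆ ℝ^n and C₂ ⊆ ℝ^m be asymptotically linear sets. Then the product C₁ × C₂ ⊆ ℝ^n × ℝ^m is asymptotically linear. -/
open Filter Topology

noncomputable def l2Pair {n m : ℕ} (z : (Fin n → ℝ) × (Fin m → ℝ)) : ℝ :=
  Real.sqrt (l2 z.1 ^ 2 + l2 z.2 ^ 2)

def AsympLinearPair {n m : ℕ} (C : Set ((Fin n → ℝ) × (Fin m → ℝ))) : Prop :=
  C.Nonempty ∧ IsClosed C ∧
  ∀ ρ : ℝ, 0 < ρ → ∀ (z : ℕ → (Fin n → ℝ) × (Fin m → ℝ)) (zb : (Fin n → ℝ) × (Fin m → ℝ)),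
    (∀ k, z k ∈ C) →
    Tendsto (fun k => l2Pair (z k)) atTop atTop →
    Tendsto (fun k => (l2Pair (z k))⁻¹ • z k) atTop (𝓝 zb) →
    ∃ k0 : ℕ, ∀ k ≥ k0, z k - ρ • zb ∈ C

/-!
Project a sequence of `C₁ ×ˢ C₂` onto its two factors. Both components, divided by the common
scale `w k = l2Pair (z k) → ∞`, converge, so it suffices that asymptotic linearity of a single
set does not depend on the scale used for normalising: if `w k → ∞` and `(w k)⁻¹ • x k → x̄ ≠ 0`,
then `‖x k‖ → ∞` and `x k / ‖x k‖ → x̄ / ‖x̄‖`, and the definition applied with `ρ ‖x̄‖` in place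
of `ρ` gives `x k - ρ • x̄ ∈ C` eventually. For `x̄ = 0` there is nothing to prove.
-/

lemma l2_eq_norm {n : ℕ} (x : Fin n → ℝ) : l2 x = ‖WithLp.toLp 2 x‖ := by
  simp [l2, EuclideanSpace.norm_eq]

section

variable {ι E : Type*} [NormedAddCommGroup E] [NormedSpace ℝ E] {l : Filter ι}
  {x : ι → E} {v : E} {w : ι → ℝ}

lemma tendsto_inv_mul_norm_of_tendsto_inv_smul (hw : Tendsto w l atTop)
    (hx : Tendsto (fun k => (w k)⁻¹ • x k) l (𝓝 v)) :
    Tendsto (fun k => (w k)⁻¹ * ‖x k‖) l (𝓝 ‖v‖) := by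
  refine hx.norm.congr' ?_
  filter_upwards [hw.eventually_gt_atTop 0] with k hk
  rw [norm_smul, Real.norm_of_nonneg (inv_nonneg.2 hk.le)]

lemma tendsto_norm_atTop_of_tendsto_inv_smul (hw : Tendsto w l atTop)
    (hx : Tendsto (fun k => (w k)⁻¹ • x k) l (𝓝 v)) (hv : v ≠ 0) :
    Tendsto (fun k => ‖x k‖) l atTop := by
  refine (hw.atTop_mul_pos (norm_pos_iff.2 hv)
    (tendsto_inv_mul_norm_of_tendsto_inv_smul hw hx)).congr' ?_
  filter_upwards [hw.eventually_gt_atTop 0] with k hk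
  rw [mul_inv_cancel_left₀ hk.ne']

lemma tendsto_inv_norm_smul_of_tendsto_inv_smul (hw : Tendsto w l atTop)
    (hx : Tendsto (fun k => (w k)⁻¹ • x k) l (𝓝 v)) (hv : v ≠ 0) :
    Tendsto (fun k => ‖x k‖⁻¹ • x k) l (𝓝 (‖v‖⁻¹ • v)) := by
  refine (((tendsto_inv_mul_norm_of_tendsto_inv_smul hw hx).inv₀
    (norm_ne_zero_iff.2 hv)).smul hx).congr' ?_
  filter_upwards [hw.eventually_gt_atTop 0] with k hk
  rw [smul_smul, mul_inv, inv_inv, mul_right_comm, mul_inv_cancel₀ hk.ne', one_mul]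

end

lemma AsympLinear.eventually_sub_smul_mem {n : ℕ} {C : Set (Fin n → ℝ)} (hC : AsympLinear C)
    {ρ : ℝ} (hρ : 0 < ρ) {x : ℕ → Fin n → ℝ} {xb : Fin n → ℝ} {w : ℕ → ℝ}
    (hxC : ∀ k, x k ∈ C) (hw : Tendsto w atTop atTop)
    (hx : Tendsto (fun k => (w k)⁻¹ • x k) atTop (𝓝 xb)) :
    ∀ᶠ k in atTop, x k - ρ • xb ∈ C := by
  rcases eq_or_ne xb 0 with rfl | hxb
  · simpa using Eventually.of_forall (f := atTop) hxC
  have hy : Tendsto (fun k => (w k)⁻¹ • WithLp.toLp 2 (x k)) atTop (𝓝 (WithLp.toLp 2 xb)) := by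
    simpa only [Function.comp_def, WithLp.toLp_smul] using
      ((PiLp.continuous_toLp 2 _).tendsto xb).comp hx
  have hyb : WithLp.toLp 2 xb ≠ 0 := by simpa using hxb
  have hnorm := tendsto_norm_atTop_of_tendsto_inv_smul hw hy hyb
  have hdir := ((PiLp.continuous_ofLp 2 _).tendsto _).comp
    (tendsto_inv_norm_smul_of_tendsto_inv_smul hw hy hyb)
  simp only [← l2_eq_norm, Function.comp_def, WithLp.ofLp_smul] at hnorm hdir
  have hxb_pos : 0 < l2 xb := by rw [l2_eq_norm]; exact norm_pos_iff.2 hyb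
  obtain ⟨k0, hk0⟩ := hC.2.2 (ρ * l2 xb) (by positivity) x _ hxC hnorm hdir
  refine eventually_atTop.2 ⟨k0, fun k hk => ?_⟩
  simpa [smul_smul, mul_assoc, hxb_pos.ne'] using hk0 k hk

/-- The product of two asymptotically linear sets is asymptotically linear. -/
theorem asympLinear_prod (n m : ℕ) (C₁ : Set (Fin n → ℝ)) (C₂ : Set (Fin m → ℝ))
    (h1 : AsympLinear C₁) (h2 : AsympLinear C₂) :
    AsympLinearPair (C₁ ×ˢ C₂) := by
  refine ⟨h1.1.prod h2.1, h1.2.1.prod h2.2.1, fun ρ hρ z zb hz hw hdir => ?_⟩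
  have hfst := h1.eventually_sub_smul_mem hρ (fun k => (hz k).1) hw
    ((continuous_fst.tendsto zb).comp hdir)
  have hsnd := h2.eventually_sub_smul_mem hρ (fun k => (hz k).2) hw
    ((continuous_snd.tendsto zb).comp hdir)
  exact eventually_atTop.1 (hfst.and hsnd)
end

section
/- Let A ∈ ℝ^{t×n} and let C' ⊂ ℝ^t be a nonempty closed bounded set. Then the set C = {x ∈ ℝ^n : Ax ∈ C'} is either empty or asymptotically linear. In particular, for any sequence {x^k} ⊆ C with ‖x^k‖₂ → +∞ and x^k/‖x^k‖₂ → x̄ one has Ax̄ = 0. -/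
open Filter Topology

theorem ContinuousLinearMap.map_eq_zero_of_tendsto_smul_of_isBounded
    {α 𝕜 E F : Type*} [NormedField 𝕜] [NormedAddCommGroup E] [NormedSpace 𝕜 E]
    [NormedAddCommGroup F] [NormedSpace 𝕜 F] (f : E →L[𝕜] F) {S : Set F}
    (hS : Bornology.IsBounded S) {l : Filter α} [l.NeBot] {x : α → E} {c : α → 𝕜} {xb : E}
    (hx : ∀ a, f (x a) ∈ S) (hc : Tendsto c l (𝓝 0))
    (hlim : Tendsto (fun a => c a • x a) l (𝓝 xb)) :
    f xb = 0 := by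
  obtain ⟨M, hM⟩ := hS.exists_norm_le
  have hfx : IsBoundedUnder (· ≤ ·) l (norm ∘ fun a => f (x a)) :=
    isBoundedUnder_of ⟨M, fun a => hM _ (hx a)⟩
  have hzero : Tendsto (fun a => f (c a • x a)) l (𝓝 0) := by
    simpa only [map_smul] using hc.zero_smul_isBoundedUnder_le hfx
  exact tendsto_nhds_unique ((f.continuous.tendsto xb).comp hlim) hzero

theorem Matrix.mulVec_eq_zero_of_tendsto_normalized {t n : ℕ} (A : Matrix (Fin t) (Fin n) ℝ)
    {C' : Set (Fin t → ℝ)} (hbd : Bornology.IsBounded C') {x : ℕ → Fin n → ℝ}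
    {xb : Fin n → ℝ} (hx : ∀ k, A.mulVec (x k) ∈ C')
    (hdiv : Tendsto (fun k => l2 (x k)) atTop atTop)
    (hlim : Tendsto (fun k => (l2 (x k))⁻¹ • x k) atTop (𝓝 xb)) :
    A.mulVec xb = 0 :=
  (LinearMap.toContinuousLinearMap A.mulVecLin).map_eq_zero_of_tendsto_smul_of_isBounded hbd hx
    hdiv.inv_tendsto_atTop hlim

theorem asympLinear_preimage_mulVec {t n : ℕ} (A : Matrix (Fin t) (Fin n) ℝ)
    {C' : Set (Fin t → ℝ)} (hcl : IsClosed C') (hbd : Bornology.IsBounded C')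
    (hne : {x : Fin n → ℝ | A.mulVec x ∈ C'}.Nonempty) :
    AsympLinear {x : Fin n → ℝ | A.mulVec x ∈ C'} := by
  refine ⟨hne, hcl.preimage (continuous_const.matrix_mulVec continuous_id), ?_⟩
  intro ρ _ x xb hx hdiv hlim
  have hxb : A.mulVec xb = 0 := A.mulVec_eq_zero_of_tendsto_normalized hbd hx hdiv hlim
  refine ⟨0, fun k _ => ?_⟩
  simpa only [Set.mem_ofPred_eq, Matrix.mulVec_sub, Matrix.mulVec_smul, hxb, smul_zero,
    sub_zero] using hx k

theorem preimage_bounded_asympLinear_general (t n : ℕ) (A : Matrix (Fin t) (Fin n) ℝ)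
    (C' : Set (Fin t → ℝ)) (hcl : IsClosed C')
    (hbd : Bornology.IsBounded C') :
    ({x : Fin n → ℝ | A.mulVec x ∈ C'} = ∅ ∨
      AsympLinear {x : Fin n → ℝ | A.mulVec x ∈ C'}) ∧
    ∀ (x : ℕ → Fin n → ℝ) (xb : Fin n → ℝ),
      (∀ k, A.mulVec (x k) ∈ C') →
      Tendsto (fun k => l2 (x k)) atTop atTop →
      Tendsto (fun k => (l2 (x k))⁻¹ • x k) atTop (𝓝 xb) →
      A.mulVec xb = 0 :=
  ⟨(Set.eq_empty_or_nonempty _).imp_right (asympLinear_preimage_mulVec A hcl hbd),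
    fun _ _ hx hdiv hlim => A.mulVec_eq_zero_of_tendsto_normalized hbd hx hdiv hlim⟩

/-- For `C' ⊂ ℝ^t` nonempty closed bounded, `C = {x : Ax ∈ C'}` is empty or asymptotically
linear; moreover any diverging sequence in `C` with normalized limit `x̄` satisfies `A x̄ = 0`. -/
theorem preimage_bounded_asympLinear (t n : ℕ) (A : Matrix (Fin t) (Fin n) ℝ)
    (C' : Set (Fin t → ℝ)) (hne : C'.Nonempty) (hcl : IsClosed C')
    (hbd : Bornology.IsBounded C') :
    ({x : Fin n → ℝ | A.mulVec x ∈ C'} = ∅ ∨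
      AsympLinear {x : Fin n → ℝ | A.mulVec x ∈ C'}) ∧
    ∀ (x : ℕ → Fin n → ℝ) (xb : Fin n → ℝ),
      (∀ k, A.mulVec (x k) ∈ C') →
      Tendsto (fun k => l2 (x k)) atTop atTop →
      Tendsto (fun k => (l2 (x k))⁻¹ • x k) atTop (𝓝 xb) →
      A.mulVec xb = 0 :=
  preimage_bounded_asympLinear_general t n A C' hcl hbd
end

section
/- Let A ∈ ℝ^{t×n}, b ∈ ℝ^t, λ > 0 and s ≥ 0. Then the set O = {(x, v) ∈ ℝ^n × ℝ^m : ‖Ax − b‖₀ + λ‖v‖₀ ≤ s} is either empty or asymptotically linear. -/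
/-!
The support of a vector can only grow in a neighbourhood of it, so `l0` is lower semicontinuous
and the sublevel set is closed. If `z k / r k → zb` with `r k → ∞`, then eventually `zb i ≠ 0`
forces `(z k) i ≠ 0`, so the support of `z k - ρ zb` lies in that of `z k`; since `x ↦ A x - b`
is affine and `b / r k → 0`, the same holds for `A x - b`. Neither `l0` term increases, so
`z k - ρ zb` stays in the sublevel set.
-/

open Filter Topology

open scoped Matrix

lemma l0_le_l0_of_ne_zero_imp {m : ℕ} {y y' : Fin m → ℝ} (h : ∀ i, y i ≠ 0 → y' i ≠ 0) :
    l0 y ≤ l0 y' :=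
  Finset.card_le_card fun i hi => by
    simp only [Finset.mem_filter, Finset.mem_univ, true_and] at hi ⊢
    exact h i hi

section Tendsto

variable {ι : Type*} {l : Filter ι} {m : ℕ}

lemma eventually_ne_zero_of_tendsto {f : ι → Fin m → ℝ} {y : Fin m → ℝ}
    (h : Tendsto f l (𝓝 y)) : ∀ᶠ k in l, ∀ i, y i ≠ 0 → f k i ≠ 0 :=
  eventually_all.2 fun i => by
    by_cases hi : y i = 0
    · exact .of_forall fun _ h => absurd hi h
    · filter_upwards [(tendsto_pi_nhds.1 h i).eventually_ne hi] with k hk _ using hk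

lemma eventually_l0_le_of_tendsto {f : ι → Fin m → ℝ} {y : Fin m → ℝ}
    (h : Tendsto f l (𝓝 y)) : ∀ᶠ k in l, l0 y ≤ l0 (f k) := by
  filter_upwards [eventually_ne_zero_of_tendsto h] with k hk using l0_le_l0_of_ne_zero_imp hk

lemma eventually_l0_sub_smul_le {y : ι → Fin m → ℝ} {r : ι → ℝ} {yb : Fin m → ℝ}
    (h : Tendsto (fun k => r k • y k) l (𝓝 yb)) (ρ : ℝ) :
    ∀ᶠ k in l, l0 (y k - ρ • yb) ≤ l0 (y k) := by
  filter_upwards [eventually_ne_zero_of_tendsto h] with k hk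
  refine l0_le_l0_of_ne_zero_imp fun i hi => ?_
  by_cases hyb : yb i = 0
  · simpa [hyb] using hi
  · exact right_ne_zero_of_mul (hk i hyb)

end Tendsto

section Sublevel

variable {t n m : ℕ} (A : Matrix (Fin t) (Fin n) ℝ) (b : Fin t → ℝ) (lam s : ℝ)

def l0Sublevel : Set ((Fin n → ℝ) × (Fin m → ℝ)) :=
  {z | (l0 (A *ᵥ z.1 - b) : ℝ) + lam * (l0 z.2 : ℝ) ≤ s}

variable {A b lam s}

lemma mem_l0Sublevel_of_l0_le (hlam : 0 ≤ lam) {z z' : (Fin n → ℝ) × (Fin m → ℝ)}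
    (hz : z ∈ l0Sublevel A b lam s) (h₁ : l0 (A *ᵥ z'.1 - b) ≤ l0 (A *ᵥ z.1 - b))
    (h₂ : l0 z'.2 ≤ l0 z.2) : z' ∈ l0Sublevel A b lam s :=
  le_trans (add_le_add (Nat.cast_le.2 h₁) (mul_le_mul_of_nonneg_left (Nat.cast_le.2 h₂) hlam)) hz

lemma isClosed_l0Sublevel (hlam : 0 ≤ lam) :
    IsClosed (l0Sublevel A b lam s : Set ((Fin n → ℝ) × (Fin m → ℝ))) := by
  refine isOpen_compl_iff.1 (isOpen_iff_mem_nhds.2 fun z hz => ?_)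
  have hres : Continuous fun z : (Fin n → ℝ) × (Fin m → ℝ) => A *ᵥ z.1 - b :=
    (continuous_const.matrix_mulVec continuous_fst).sub continuous_const
  filter_upwards [eventually_l0_le_of_tendsto (hres.tendsto z),
    eventually_l0_le_of_tendsto (continuous_snd.tendsto z)] with z' h₁ h₂ hz'
  exact hz (mem_l0Sublevel_of_l0_le hlam hz' h₁ h₂)

lemma eventually_sub_smul_mem_l0Sublevel (hlam : 0 ≤ lam) {ι : Type*} {l : Filter ι}
    {z : ι → (Fin n → ℝ) × (Fin m → ℝ)} {r : ι → ℝ} {zb : (Fin n → ℝ) × (Fin m → ℝ)}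
    (hz : ∀ k, z k ∈ l0Sublevel A b lam s) (hr : Tendsto r l atTop)
    (hu : Tendsto (fun k => (r k)⁻¹ • z k) l (𝓝 zb)) (ρ : ℝ) :
    ∀ᶠ k in l, z k - ρ • zb ∈ l0Sublevel A b lam s := by
  have hres : Tendsto (fun k => (r k)⁻¹ • (A *ᵥ (z k).1 - b)) l (𝓝 (A *ᵥ zb.1)) := by
    have hx : Tendsto (fun k => A *ᵥ ((r k)⁻¹ • z k).1) l (𝓝 (A *ᵥ zb.1)) :=
      ((continuous_const.matrix_mulVec continuous_fst).tendsto zb).comp hu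
    have hb := (tendsto_inv_atTop_zero.comp hr).smul_const b
    simpa [Function.comp_def, smul_sub, Matrix.mulVec_smul] using hx.sub hb
  filter_upwards [eventually_l0_sub_smul_le hres ρ,
    eventually_l0_sub_smul_le ((continuous_snd.tendsto zb).comp hu) ρ] with k h₁ h₂
  refine mem_l0Sublevel_of_l0_le hlam (hz k) ?_ h₂
  have hshift : A *ᵥ (z k - ρ • zb).1 - b = (A *ᵥ (z k).1 - b) - ρ • (A *ᵥ zb.1) := by
    simp only [Prod.fst_sub, Prod.smul_fst, Matrix.mulVec_sub, Matrix.mulVec_smul]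
    abel
  rwa [hshift]

end Sublevel

theorem l0_pair_sublevel_asympLinear_general (t n m : ℕ) (A : Matrix (Fin t) (Fin n) ℝ)
    (b : Fin t → ℝ) (lam s : ℝ) (hlam : 0 < lam) :
    {z : (Fin n → ℝ) × (Fin m → ℝ) |
        (l0 (A.mulVec z.1 - b) : ℝ) + lam * (l0 z.2 : ℝ) ≤ s} = ∅ ∨
      AsympLinearPair {z : (Fin n → ℝ) × (Fin m → ℝ) |
        (l0 (A.mulVec z.1 - b) : ℝ) + lam * (l0 z.2 : ℝ) ≤ s} := by
  refine (Set.eq_empty_or_nonempty _).imp id fun hne =>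
    ⟨hne, isClosed_l0Sublevel hlam.le, fun ρ _ z zb hz hr hu => ?_⟩
  exact eventually_atTop.1 (eventually_sub_smul_mem_l0Sublevel hlam.le hz hr hu ρ)

/-- `O = {(x,v) : ‖Ax − b‖₀ + λ‖v‖₀ ≤ s}` is either empty or asymptotically linear. -/
theorem l0_pair_sublevel_asympLinear (t n m : ℕ) (A : Matrix (Fin t) (Fin n) ℝ)
    (b : Fin t → ℝ) (lam s : ℝ) (hlam : 0 < lam) (hs : 0 ≤ s) :
    {z : (Fin n → ℝ) × (Fin m → ℝ) |
        (l0 (A.mulVec z.1 - b) : ℝ) + lam * (l0 z.2 : ℝ) ≤ s} = ∅ ∨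
      AsympLinearPair {z : (Fin n → ℝ) × (Fin m → ℝ) |
        (l0 (A.mulVec z.1 - b) : ℝ) + lam * (l0 z.2 : ℝ) ≤ s} :=
  l0_pair_sublevel_asympLinear_general t n m A b lam s hlam
end

section
/- Let A ∈ ℝ^{t×n} and b ∈ ℝ^t, and consider any sequence {x^k} in ℝ^n with ‖x^k‖₂ → +∞ and x^k/‖x^k‖₂ → x̄. Then there exists k₀ such that for all k ≥ k₀ and all ρ > 0 appearing fixed in advance, ‖A(x^k − ρx̄) − b‖₀ ≤ ‖Ax^k − b‖₀. -/
open Filter Topology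

/-!
Let `c_k = ‖x^k‖₂`. Applying `A`, `c_k⁻¹ (A x^k)_i → (A x̄)_i`, so on the support of `A x̄`
the entries `(A x^k)_i` blow up and `(A x^k − b)_i ≠ 0` eventually. Off that support the shift
by `ρ x̄` does not change the `i`-th entry of the residual. Hence eventually the support of
`A(x^k − ρ x̄) − b` is contained in that of `A x^k − b`.
-/

theorem l0_le_of_ne_zero_imp {m : ℕ} {y z : Fin m → ℝ} (h : ∀ i, y i ≠ 0 → z i ≠ 0) :
    l0 y ≤ l0 z :=
  Finset.card_le_card fun i => by
    simpa only [Finset.mem_filter, Finset.mem_univ, true_and] using h i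

section Blowup

variable {α : Type*} {l : Filter α} {c : α → ℝ}

theorem Filter.Tendsto.abs_atTop_of_inv_mul {y : α → ℝ} {a : ℝ} (hc : Tendsto c l atTop)
    (hy : Tendsto (fun k => (c k)⁻¹ * y k) l (𝓝 a)) (ha : a ≠ 0) :
    Tendsto (fun k => |y k|) l atTop := by
  have hprod : Tendsto (fun k => c k * |(c k)⁻¹ * y k|) l atTop :=
    hc.atTop_mul_pos (abs_pos.2 ha) hy.abs
  refine hprod.congr' ?_
  filter_upwards [hc.eventually_gt_atTop 0] with k hk
  rw [abs_mul, abs_inv, abs_of_pos hk, mul_inv_cancel_left₀ hk.ne']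

theorem Filter.Tendsto.eventually_ne_of_inv_mul {y : α → ℝ} {a : ℝ} (hc : Tendsto c l atTop)
    (hy : Tendsto (fun k => (c k)⁻¹ * y k) l (𝓝 a)) (ha : a ≠ 0) (β : ℝ) :
    ∀ᶠ k in l, y k ≠ β :=
  ((hc.abs_atTop_of_inv_mul hy ha).eventually_gt_atTop |β|).mono fun _ hk hyβ =>
    (hyβ ▸ hk).false

theorem Filter.Tendsto.eventually_sub_ne_zero_of_inv_smul {ι : Type*} [Finite ι]
    {y : α → ι → ℝ} {v : ι → ℝ} (hc : Tendsto c l atTop)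
    (hy : Tendsto (fun k => (c k)⁻¹ • y k) l (𝓝 v)) (b : ι → ℝ) :
    ∀ᶠ k in l, ∀ i, v i ≠ 0 → y k i - b i ≠ 0 := by
  refine eventually_all.2 fun i => ?_
  by_cases hv : v i = 0
  · exact Eventually.of_forall fun _ h => absurd hv h
  · have hyi : Tendsto (fun k => (c k)⁻¹ * y k i) l (𝓝 (v i)) :=
      ((continuous_apply i).tendsto v).comp hy
    filter_upwards [hc.eventually_ne_of_inv_mul hyi hv (b i)] with k hk _
    exact sub_ne_zero.2 hk

end Blowup

theorem l0_shift_eventually_le_general (t n : ℕ) (A : Matrix (Fin t) (Fin n) ℝ) (b : Fin t → ℝ)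
    (x : ℕ → Fin n → ℝ) (xb : Fin n → ℝ)
    (h1 : Filter.Tendsto (fun k => l2 (x k)) Filter.atTop Filter.atTop)
    (h2 : Filter.Tendsto (fun k => (l2 (x k))⁻¹ • x k) Filter.atTop (𝓝 xb))
    (ρ : ℝ) :
    ∃ k0 : ℕ, ∀ k ≥ k0,
      l0 (A.mulVec (x k - ρ • xb) - b) ≤ l0 (A.mulVec (x k) - b) := by
  have hAx : Tendsto (fun k => (l2 (x k))⁻¹ • A.mulVec (x k)) atTop (𝓝 (A.mulVec xb)) := by
    simpa only [Function.comp_def, id_eq, Matrix.mulVec_smul] using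
      ((continuous_const (y := A)).matrix_mulVec continuous_id |>.tendsto xb).comp h2
  obtain ⟨k0, hk0⟩ := eventually_atTop.1 (h1.eventually_sub_ne_zero_of_inv_smul hAx b)
  refine ⟨k0, fun k hk => l0_le_of_ne_zero_imp fun i hi => ?_⟩
  by_cases hv : A.mulVec xb i = 0
  · simpa [Matrix.mulVec_sub, Matrix.mulVec_smul, hv] using hi
  · exact hk0 k hk i hv

/-- For a diverging sequence with normalized limit `x̄` and fixed `ρ > 0`, eventually
`‖A(x^k − ρx̄) − b‖₀ ≤ ‖Ax^k − b‖₀`. -/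
theorem l0_shift_eventually_le (t n : ℕ) (A : Matrix (Fin t) (Fin n) ℝ) (b : Fin t → ℝ)
    (x : ℕ → Fin n → ℝ) (xb : Fin n → ℝ)
    (h1 : Filter.Tendsto (fun k => l2 (x k)) Filter.atTop Filter.atTop)
    (h2 : Filter.Tendsto (fun k => (l2 (x k))⁻¹ • x k) Filter.atTop (𝓝 xb))
    (ρ : ℝ) (hρ : 0 < ρ) :
    ∃ k0 : ℕ, ∀ k ≥ k0,
      l0 (A.mulVec (x k - ρ • xb) - b) ≤ l0 (A.mulVec (x k) - b) :=
  l0_shift_eventually_le_general t n A b x xb h1 h2 ρ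
end

section
/- The function f(x) = ‖Ax − b‖₀, for A ∈ ℝ^{t×n} and b ∈ ℝ^t, is asymptotically level stable. -/
open Filter Topology

/-- Asymptotic function `f_∞(x) = liminf_{x'→x, t→+∞} f(t x')/t`. -/
noncomputable def asympFn {n : ℕ} (f : (Fin n → ℝ) → EReal) (x : Fin n → ℝ) : EReal :=
  Filter.liminf (fun p : (Fin n → ℝ) × ℝ => f (p.2 • p.1) / (p.2 : EReal)) ((𝓝 x) ×ˢ atTop)

/-- Asymptotically level stable function. -/
def ALS {n : ℕ} (f : (Fin n → ℝ) → EReal) : Prop :=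
  ∀ ρ : ℝ, 0 < ρ → ∀ t : ℕ → ℝ, (∃ M : ℝ, ∀ k, |t k| ≤ M) →
  ∀ (x : ℕ → Fin n → ℝ) (xb : Fin n → ℝ),
    (∀ k, f (x k) ≤ (t k : EReal)) →
    Tendsto (fun k => l2 (x k)) atTop atTop →
    Tendsto (fun k => (l2 (x k))⁻¹ • x k) atTop (𝓝 xb) →
    asympFn f xb = 0 →
    ∃ k0 : ℕ, ∀ k ≥ k0, f (x k - ρ • xb) ≤ (t k : EReal)

/-! Coordinates of `A x k` on which `A x̄` does not vanish grow like `‖x k‖`, so for large `k`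
the support of `A x̄` lies inside the support of `A x k − b`. Subtracting a multiple of `A x̄`
therefore cannot enlarge that support. -/

open Matrix

theorem l0_sub_le_of_support_subset {m : ℕ} {y w : Fin m → ℝ} (h : ∀ i, w i ≠ 0 → y i ≠ 0) :
    l0 (y - w) ≤ l0 y := by
  refine Finset.card_le_card fun i hi => ?_
  simp only [Finset.mem_filter, Finset.mem_univ, true_and, Pi.sub_apply] at hi ⊢
  intro hy
  have hw : w i = 0 := by_contra fun hw => h i hw hy
  exact hi (by rw [hy, hw, sub_zero])

theorem eventually_ne_of_tendsto_inv_mul {α : Type*} {l : Filter α} {s y : α → ℝ} {c : ℝ}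
    (hs : Tendsto s l atTop) (hy : Tendsto (fun k => (s k)⁻¹ * y k) l (𝓝 c)) (hc : c ≠ 0)
    (a : ℝ) : ∀ᶠ k in l, y k ≠ a := by
  have ha : Tendsto (fun k => (s k)⁻¹ * a) l (𝓝 0) := by
    simpa using (tendsto_inv_atTop_zero.comp hs).mul_const a
  filter_upwards [(hy.sub ha).eventually_ne (by simpa using hc)] with k hk hya
  exact hk (by rw [hya, sub_self])

/-- `f(x) = ‖Ax − b‖₀` is asymptotically level stable. -/
theorem l0_affine_ALS (t n : ℕ) (A : Matrix (Fin t) (Fin n) ℝ) (b : Fin t → ℝ) :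
    ALS (fun x => ((l0 (A.mulVec x - b) : ℝ) : EReal)) := by
  intro ρ _ ts _ x xb hle hl2 hdir _
  have hA : Tendsto (fun k => (l2 (x k))⁻¹ • (A *ᵥ x k)) atTop (𝓝 (A *ᵥ xb)) := by
    simpa only [Function.comp_def, mulVecLin_apply, mulVec_smul] using
      ((mulVecLin A).continuous_of_finiteDimensional.tendsto xb).comp hdir
  have hsupp : ∀ᶠ k in atTop, ∀ i, (ρ • (A *ᵥ xb)) i ≠ 0 → (A *ᵥ x k - b) i ≠ 0 := by
    refine eventually_all.2 fun i => ?_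
    by_cases hi : (A *ᵥ xb) i = 0
    · exact Eventually.of_forall fun k h => (h (by simp [hi])).elim
    · filter_upwards [eventually_ne_of_tendsto_inv_mul hl2 (tendsto_pi_nhds.1 hA i) hi (b i)]
        with k hk _
      exact sub_ne_zero.2 hk
  obtain ⟨k0, hk0⟩ := eventually_atTop.1 hsupp
  refine ⟨k0, fun k hk => le_trans ?_ (hle k)⟩
  have hshift : A *ᵥ (x k - ρ • xb) - b = (A *ᵥ x k - b) - ρ • (A *ᵥ xb) := by
    rw [mulVec_sub, mulVec_smul]
    abel
  dsimp only
  rw [hshift]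
  exact_mod_cast l0_sub_le_of_support_subset (hk0 k hk)
end

section
/- Let A ∈ ℝ^{t×n} and let g : ℝ^t → ℝ ∪ {+∞} be proper, lower semicontinuous and level bounded (g(y) → +∞ as ‖y‖₂ → +∞). Then f = g ∘ A is asymptotically level stable. In particular, for any sequence {x^k} with f(x^k) ≤ t^k for a bounded sequence {t^k}, ‖x^k‖₂ → +∞ and x^k/‖x^k‖₂ → x̄, one has x̄ ∈ ker(A). -/
open Filter Topology

/-! Along a sequence with `g (A x^k) ≤ t^k` bounded above, level boundedness of `g` keeps `A x^k`
bounded, so `A (x^k / ‖x^k‖₂) → 0` while it also tends to `A x̄`; hence `A x̄ = 0`. Then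
`f (x^k - ρ x̄) = g (A x^k) = f (x^k)`, which gives asymptotic level stability with `k₀ = 0`. -/

lemma norm_le_l2 {m : ℕ} (y : Fin m → ℝ) : ‖y‖ ≤ l2 y := by
  refine (pi_norm_le_iff_of_nonneg (Real.sqrt_nonneg _)).2 fun i => ?_
  calc ‖y i‖ = Real.sqrt ((y i) ^ 2) := (Real.sqrt_sq_eq_abs _).symm
    _ ≤ l2 y := Real.sqrt_le_sqrt <|
      Finset.single_le_sum (fun j _ => sq_nonneg (y j)) (Finset.mem_univ i)

lemma isBoundedUnder_norm_of_levelBounded {ι : Type*} {m : ℕ} {l : Filter ι}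
    {g : (Fin m → ℝ) → EReal}
    (hlb : ∀ M : ℝ, ∃ R : ℝ, ∀ y : Fin m → ℝ, R ≤ l2 y → (M : EReal) ≤ g y)
    {y : ι → Fin m → ℝ} {M : ℝ} (hy : ∀ i, g (y i) ≤ (M : EReal)) :
    IsBoundedUnder (· ≤ ·) l (norm ∘ y) := by
  obtain ⟨R, hR⟩ := hlb (M + 1)
  refine isBoundedUnder_of ⟨R, fun i => (norm_le_l2 _).trans ?_⟩
  by_contra! hRy
  have : ((M + 1 : ℝ) : EReal) ≤ M := (hR _ hRy.le).trans (hy i)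
  linarith [EReal.coe_le_coe_iff.1 this]

lemma mulVec_eq_zero_of_levelBounded {t n : ℕ} (A : Matrix (Fin t) (Fin n) ℝ)
    {g : (Fin t → ℝ) → EReal}
    (hlb : ∀ M : ℝ, ∃ R : ℝ, ∀ y : Fin t → ℝ, R ≤ l2 y → (M : EReal) ≤ g y)
    (tk : ℕ → ℝ) (htk : ∃ M : ℝ, ∀ k, |tk k| ≤ M) (x : ℕ → Fin n → ℝ) (xb : Fin n → ℝ)
    (hf : ∀ k, g (A.mulVec (x k)) ≤ (tk k : EReal))
    (hdiv : Tendsto (fun k => l2 (x k)) atTop atTop)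
    (hlim : Tendsto (fun k => (l2 (x k))⁻¹ • x k) atTop (𝓝 xb)) :
    A.mulVec xb = 0 := by
  obtain ⟨M, hM⟩ := htk
  have hbdd : IsBoundedUnder (· ≤ ·) atTop (norm ∘ fun k => A.mulVec (x k)) :=
    isBoundedUnder_norm_of_levelBounded hlb (M := M) fun k =>
      (hf k).trans (EReal.coe_le_coe_iff.2 (abs_le.1 (hM k)).2)
  have hzero : Tendsto (fun k => (l2 (x k))⁻¹ • A.mulVec (x k)) atTop (𝓝 0) :=
    hdiv.inv_tendsto_atTop.zero_smul_isBoundedUnder_le hbdd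
  have hAxb : Tendsto (fun k => A.mulVec ((l2 (x k))⁻¹ • x k)) atTop (𝓝 (A.mulVec xb)) :=
    ((continuous_const.matrix_mulVec continuous_id).tendsto xb).comp hlim
  simp_rw [Matrix.mulVec_smul] at hAxb
  exact tendsto_nhds_unique hAxb hzero

theorem comp_levelBounded_ALS_general (t n : ℕ) (A : Matrix (Fin t) (Fin n) ℝ)
    (g : (Fin t → ℝ) → EReal)
    (hlb : ∀ M : ℝ, ∃ R : ℝ, ∀ y : Fin t → ℝ, R ≤ l2 y → (M : EReal) ≤ g y) :
    ALS (fun x => g (A.mulVec x)) ∧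
    ∀ (tk : ℕ → ℝ), (∃ M : ℝ, ∀ k, |tk k| ≤ M) →
      ∀ (x : ℕ → Fin n → ℝ) (xb : Fin n → ℝ),
        (∀ k, g (A.mulVec (x k)) ≤ (tk k : EReal)) →
        Tendsto (fun k => l2 (x k)) atTop atTop →
        Tendsto (fun k => (l2 (x k))⁻¹ • x k) atTop (𝓝 xb) →
        A.mulVec xb = 0 := by
  have hker := mulVec_eq_zero_of_levelBounded A hlb
  refine ⟨fun ρ _ tk htk x xb hf hdiv hlim _ => ⟨0, fun k _ => ?_⟩, hker⟩
  show g (A.mulVec (x k - ρ • xb)) ≤ _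
  rw [Matrix.mulVec_sub, Matrix.mulVec_smul, hker tk htk x xb hf hdiv hlim, smul_zero, sub_zero]
  exact hf k

/-- If `g` is proper, lsc and level bounded then `f = g ∘ A` is asymptotically level
stable; in particular, any diverging sequence with bounded values `f(x^k) ≤ t^k` and
normalized limit `x̄` satisfies `A x̄ = 0`. -/
theorem comp_levelBounded_ALS (t n : ℕ) (A : Matrix (Fin t) (Fin n) ℝ)
    (g : (Fin t → ℝ) → EReal) (hproper : ∃ y, g y ≠ ⊤) (hnb : ∀ y, g y ≠ ⊥)
    (hlsc : LowerSemicontinuous g)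
    (hlb : ∀ M : ℝ, ∃ R : ℝ, ∀ y : Fin t → ℝ, R ≤ l2 y → (M : EReal) ≤ g y) :
    ALS (fun x => g (A.mulVec x)) ∧
    ∀ (tk : ℕ → ℝ), (∃ M : ℝ, ∀ k, |tk k| ≤ M) →
      ∀ (x : ℕ → Fin n → ℝ) (xb : Fin n → ℝ),
        (∀ k, g (A.mulVec (x k)) ≤ (tk k : EReal)) →
        Tendsto (fun k => l2 (x k)) atTop atTop →
        Tendsto (fun k => (l2 (x k))⁻¹ • x k) atTop (𝓝 xb) →
        A.mulVec xb = 0 :=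
  comp_levelBounded_ALS_general t n A g hlb
end

section
/- Let B ∈ ℝ^{m×n} be nonzero, p > 0, C ⊂ ℝ^n nonempty compact, k* = min{‖Bx‖₀ : x ∈ C} with k* ≥ 1, τ = inf_{x∈C} (k*-th largest of {|(Bx)_i|}), and γ* = 1/τ^p. Then for every γ > γ*, the problems min{‖Bx‖₀ : x ∈ C} and min{ψ_γ(Bx) : x ∈ C} have the same optimal value k* and the same set of optimal solutions. -/
open Filter Topology

/-- The `k`-th largest value (1-indexed) among the entries of `v`. -/
noncomputable def kthLargest {m : ℕ} (v : Fin m → ℝ) (k : ℕ) : ℝ :=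
  sSup {r : ℝ | k ≤ (Finset.univ.filter fun i => r ≤ v i).card}

/-!
Each term `min (γ |y_i|^p) 1` of `ψ_γ(y)` lies in `[0, 1]`, vanishes exactly when `y_i = 0`, and
equals `1` as soon as `|y_i| ≥ τ`, because `γ τ^p > 1`. For `x ∈ C`, at least `k*` entries of `Bx`
have modulus at least `τ`, so `k* ≤ ψ_γ(Bx) ≤ ‖Bx‖₀`, and `ψ_γ(Bx) = k*` forces every other entry
to vanish, i.e. `‖Bx‖₀ = k*`. That `τ > 0` comes from the `k`-th largest entry being a
`1`-Lipschitz function of the vector, hence attaining its minimum on the compact set `C`, where it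
is positive since `‖Bx‖₀ ≥ k*`.
-/

open Finset

section KthLargest

variable {m : ℕ} (v : Fin m → ℝ) (k : ℕ)

def kthLargestSet : Set ℝ := {r : ℝ | k ≤ (Finset.univ.filter fun i => r ≤ v i).card}

lemma mem_kthLargestSet_iff {r : ℝ} :
    r ∈ kthLargestSet v k ↔ ∃ T : Finset (Fin m), #T = k ∧ ∀ i ∈ T, r ≤ v i := by
  constructor
  · intro h
    obtain ⟨T, hT, hcard⟩ := exists_subset_card_eq h
    exact ⟨T, hcard, fun i hi => (mem_filter.1 (hT hi)).2⟩
  · rintro ⟨T, rfl, hT⟩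
    exact card_le_card fun i hi => mem_filter.2 ⟨mem_univ i, hT i hi⟩

lemma isClosed_kthLargestSet : IsClosed (kthLargestSet v k) := by
  have h : kthLargestSet v k = ⋃ T ∈ univ.powersetCard k, ⋂ i ∈ T, Set.Iic (v i) := by
    ext r
    simp [mem_kthLargestSet_iff]
  rw [h]
  exact isClosed_biUnion_finset fun T _ => isClosed_biInter fun i _ => isClosed_Iic

lemma kthLargestSet_nonempty (hkm : k ≤ m) : (kthLargestSet v k).Nonempty := by
  refine ⟨-∑ i, |v i|, ?_⟩
  have hle : ∀ i, -∑ j, |v j| ≤ v i := fun i =>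
    (neg_le_neg (single_le_sum (fun j _ => abs_nonneg (v j)) (mem_univ i))).trans (neg_abs_le _)
  simpa [kthLargestSet, hle] using hkm

lemma bddAbove_kthLargestSet (hk1 : 1 ≤ k) : BddAbove (kthLargestSet v k) := by
  refine ⟨∑ i, |v i|, fun r hr => ?_⟩
  obtain ⟨i, hi⟩ := card_pos.1 (hk1.trans hr)
  calc r ≤ v i := (mem_filter.1 hi).2
    _ ≤ |v i| := le_abs_self _
    _ ≤ ∑ j, |v j| := single_le_sum (fun j _ => abs_nonneg (v j)) (mem_univ i)

lemma kthLargest_mem_kthLargestSet (hk1 : 1 ≤ k) (hkm : k ≤ m) :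
    kthLargest v k ∈ kthLargestSet v k :=
  (isClosed_kthLargestSet v k).csSup_mem (kthLargestSet_nonempty v k hkm)
    (bddAbove_kthLargestSet v k hk1)

lemma le_kthLargest (hk1 : 1 ≤ k) {r : ℝ} (hr : r ∈ kthLargestSet v k) : r ≤ kthLargest v k :=
  le_csSup (bddAbove_kthLargestSet v k hk1) hr

lemma kthLargest_pos (hk1 : 1 ≤ k) (hpos : k ≤ #{i | 0 < v i}) : 0 < kthLargest v k := by
  set P := univ.filter fun i => 0 < v i
  have hne : P.Nonempty := card_pos.1 (hk1.trans hpos)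
  have hmem : P.inf' hne v ∈ kthLargestSet v k :=
    hpos.trans (card_le_card fun i hi => mem_filter.2 ⟨mem_univ i, inf'_le v hi⟩)
  exact ((lt_inf'_iff hne).2 fun i hi => (mem_filter.1 hi).2).trans_le (le_kthLargest v k hk1 hmem)

lemma lipschitzWith_kthLargest (hk1 : 1 ≤ k) (hkm : k ≤ m) :
    LipschitzWith 1 fun v : Fin m → ℝ => kthLargest v k := by
  refine LipschitzWith.of_le_add fun v w => ?_
  refine csSup_le (kthLargestSet_nonempty v k hkm) fun r hr => ?_
  have hshift : r - dist v w ∈ kthLargestSet w k := by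
    refine hr.trans (card_le_card fun i hi => mem_filter.2 ⟨mem_univ i, ?_⟩)
    have hvw : v i - w i ≤ dist v w := (le_abs_self _).trans (dist_le_pi_dist v w i)
    linarith [(mem_filter.1 hi).2]
  linarith [le_kthLargest w k hk1 hshift]

end KthLargest

section CappedSum

variable {ι : Type*} [Fintype ι] {f : ι → ℝ}

lemma sum_filter_eq_one : ∑ i with f i = 1, f i = #{i | f i = 1} := by
  rw [sum_congr rfl fun i hi => (mem_filter.1 hi).2]
  simp

lemma card_filter_eq_one_le_sum (h0 : ∀ i, 0 ≤ f i) : (#{i | f i = 1} : ℝ) ≤ ∑ i, f i :=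
  sum_filter_eq_one.symm.le.trans
    (sum_le_sum_of_subset_of_nonneg (subset_univ _) fun i _ _ => h0 i)

lemma sum_le_card_filter_ne_zero (h1 : ∀ i, f i ≤ 1) : ∑ i, f i ≤ #{i | f i ≠ 0} := by
  rw [← sum_filter_ne_zero]
  calc ∑ i with f i ≠ 0, f i ≤ ∑ i with f i ≠ 0, (1 : ℝ) := sum_le_sum fun i _ => h1 i
    _ = #{i | f i ≠ 0} := by simp

lemma card_filter_ne_zero_le_of_sum_le (h0 : ∀ i, 0 ≤ f i) (h : ∑ i, f i ≤ #{i | f i = 1}) :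
    #{i | f i ≠ 0} ≤ #{i | f i = 1} := by
  have hrest : ∑ i with ¬f i = 1, f i = 0 := by
    have hsplit := sum_filter_add_sum_filter_not univ (fun i => f i = 1) f
    have hnonneg : 0 ≤ ∑ i with ¬f i = 1, f i := sum_nonneg fun i _ => h0 i
    linarith [sum_filter_eq_one (f := f)]
  refine card_le_card fun i hi => mem_filter.2 ⟨mem_univ i, ?_⟩
  by_contra hne
  exact (mem_filter.1 hi).2
    ((sum_eq_zero_iff_of_nonneg fun j _ => h0 j).1 hrest i (mem_filter.2 ⟨mem_univ i, hne⟩))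

end CappedSum

section Psi

noncomputable def cappedPow (γ p t : ℝ) : ℝ := min (γ * |t| ^ p) 1

noncomputable def psi (γ p : ℝ) {m : ℕ} (y : Fin m → ℝ) : ℝ := ∑ i, cappedPow γ p (y i)

variable {γ p τ t : ℝ}

lemma cappedPow_nonneg (hγ : 0 ≤ γ) : 0 ≤ cappedPow γ p t :=
  le_min (by positivity) zero_le_one

lemma cappedPow_le_one : cappedPow γ p t ≤ 1 := min_le_right _ _

lemma cappedPow_eq_zero_iff (hγ : 0 < γ) (hp : p ≠ 0) : cappedPow γ p t = 0 ↔ t = 0 := by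
  constructor
  · intro h
    by_contra ht
    exact (lt_min (by positivity) one_pos : 0 < cappedPow γ p t).ne' h
  · rintro rfl
    simp [cappedPow, Real.zero_rpow hp]

lemma cappedPow_eq_one (hγ : 0 ≤ γ) (hτ : 0 ≤ τ) (hp : 0 ≤ p) (hγτ : 1 ≤ γ * τ ^ p)
    (ht : τ ≤ |t|) : cappedPow γ p t = 1 :=
  min_eq_right (hγτ.trans (mul_le_mul_of_nonneg_left (Real.rpow_le_rpow hτ ht hp) hγ))

variable {m k : ℕ} (y : Fin m → ℝ)

lemma l0_eq_card_filter_cappedPow_ne_zero (hγ : 0 < γ) (hp : p ≠ 0) :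
    l0 y = #{i | cappedPow γ p (y i) ≠ 0} := by
  simp only [l0, ne_eq, cappedPow_eq_zero_iff hγ hp]

lemma psi_le_l0 (hγ : 0 < γ) (hp : p ≠ 0) : psi γ p y ≤ l0 y := by
  rw [l0_eq_card_filter_cappedPow_ne_zero y hγ hp]
  exact sum_le_card_filter_ne_zero fun i => cappedPow_le_one

lemma card_le_card_filter_cappedPow_eq_one (hγ : 0 ≤ γ) (hτ : 0 ≤ τ) (hp : 0 ≤ p)
    (hγτ : 1 ≤ γ * τ ^ p) : #{i | τ ≤ |y i|} ≤ #{i | cappedPow γ p (y i) = 1} :=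
  card_le_card fun i hi =>
    mem_filter.2 ⟨mem_univ i, cappedPow_eq_one hγ hτ hp hγτ (mem_filter.1 hi).2⟩

lemma le_psi_of_le_card (hγ : 0 ≤ γ) (hτ : 0 ≤ τ) (hp : 0 ≤ p) (hγτ : 1 ≤ γ * τ ^ p)
    (hk : k ≤ #{i | τ ≤ |y i|}) : (k : ℝ) ≤ psi γ p y :=
  calc (k : ℝ) ≤ #{i | cappedPow γ p (y i) = 1} := by
        exact_mod_cast hk.trans (card_le_card_filter_cappedPow_eq_one y hγ hτ hp hγτ)
    _ ≤ psi γ p y := card_filter_eq_one_le_sum fun i => cappedPow_nonneg hγ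

lemma l0_le_of_psi_le (hγ : 0 < γ) (hτ : 0 ≤ τ) (hp : 0 < p) (hγτ : 1 ≤ γ * τ ^ p)
    (hk : k ≤ #{i | τ ≤ |y i|}) (hψ : psi γ p y ≤ k) : l0 y ≤ k := by
  have hnonneg : ∀ i, 0 ≤ cappedPow γ p (y i) := fun i => cappedPow_nonneg hγ.le
  have hk_le : k ≤ #{i | cappedPow γ p (y i) = 1} :=
    hk.trans (card_le_card_filter_cappedPow_eq_one y hγ.le hτ hp.le hγτ)
  have hle_k : #{i | cappedPow γ p (y i) = 1} ≤ k := by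
    exact_mod_cast (card_filter_eq_one_le_sum hnonneg).trans hψ
  rw [l0_eq_card_filter_cappedPow_ne_zero y hγ hp.ne']
  exact (card_filter_ne_zero_le_of_sum_le hnonneg (hψ.trans (by exact_mod_cast hk_le))).trans hle_k

end Psi

theorem exact_approx_compact_general (n m : ℕ) (B : Matrix (Fin m) (Fin n) ℝ)
    (p : ℝ) (hp : 0 < p) (C : Set (Fin n → ℝ)) (hC : IsCompact C)
    (kstar : ℕ) (hk1 : 1 ≤ kstar)
    (hmin : IsLeast {k : ℕ | ∃ x ∈ C, l0 (B.mulVec x) = k} kstar)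
    (τ : ℝ)
    (hτ : τ = sInf {r : ℝ | ∃ x ∈ C, r = kthLargest (fun i => |B.mulVec x i|) kstar}) :
    ∀ γ : ℝ, 1 / τ ^ p < γ →
      IsLeast {r : ℝ | ∃ x ∈ C, r = ∑ i, min (γ * |B.mulVec x i| ^ p) 1} (kstar : ℝ) ∧
      {x ∈ C | l0 (B.mulVec x) = kstar}
        = {x ∈ C | ∑ i, min (γ * |B.mulVec x i| ^ p) 1 = (kstar : ℝ)} := by
  intro γ hγ
  obtain ⟨x₀, hx₀C, hx₀⟩ := hmin.1
  have hl0 : ∀ x ∈ C, kstar ≤ l0 (B.mulVec x) := fun x hx => hmin.2 ⟨x, hx, rfl⟩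
  have hkm : kstar ≤ m := hx₀ ▸ (card_filter_le _ _).trans (card_fin m).le
  set g := fun x : Fin n → ℝ => kthLargest (fun i => |B.mulVec x i|) kstar
  have hg : Continuous g :=
    (lipschitzWith_kthLargest kstar hk1 hkm).continuous.comp (by fun_prop)
  obtain ⟨x₁, hx₁C, hx₁min⟩ := hC.exists_isMinOn ⟨x₀, hx₀C⟩ hg.continuousOn
  have hτx₁ : τ = g x₁ := hτ ▸ IsLeast.csInf_eq
    ⟨⟨x₁, hx₁C, rfl⟩, by rintro _ ⟨x, hx, rfl⟩; exact hx₁min hx⟩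
  have hτpos : 0 < τ := hτx₁ ▸ kthLargest_pos _ _ hk1 (by simpa [abs_pos, l0] using hl0 x₁ hx₁C)
  have hγτ : 1 ≤ γ * τ ^ p := ((div_lt_iff₀ (by positivity)).1 hγ).le
  have hγpos : 0 < γ := (one_div_pos.2 (by positivity)).trans hγ
  have hcount : ∀ x ∈ C, kstar ≤ #{i | τ ≤ |B.mulVec x i|} := fun x hx =>
    (kthLargest_mem_kthLargestSet _ _ hk1 hkm).trans <| card_le_card fun i hi =>
      mem_filter.2 ⟨mem_univ i, hτx₁ ▸ (hx₁min hx).trans (mem_filter.1 hi).2⟩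
  have hψ_ge : ∀ x ∈ C, (kstar : ℝ) ≤ psi γ p (B.mulVec x) := fun x hx =>
    le_psi_of_le_card _ hγpos.le hτpos.le hp.le hγτ (hcount x hx)
  refine ⟨⟨⟨x₀, hx₀C, ?_⟩, ?_⟩, ?_⟩
  · exact le_antisymm (hψ_ge x₀ hx₀C) (hx₀ ▸ psi_le_l0 _ hγpos hp.ne')
  · rintro _ ⟨x, hx, rfl⟩
    exact hψ_ge x hx
  · ext x
    refine ⟨fun ⟨hx, hx0⟩ => ⟨hx, ?_⟩, fun ⟨hx, hxψ⟩ => ⟨hx, ?_⟩⟩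
    · exact le_antisymm (hx0 ▸ psi_le_l0 _ hγpos hp.ne') (hψ_ge x hx)
    · exact le_antisymm (l0_le_of_psi_le _ hγpos hτpos.le hp hγτ (hcount x hx) hxψ.le) (hl0 x hx)

/-- For `γ > γ* = 1/τ^p`, the problems `min{‖Bx‖₀ : x ∈ C}` and `min{ψ_γ(Bx) : x ∈ C}`
have the same optimal value `k*` and the same optimal solution set. -/
theorem exact_approx_compact (n m : ℕ) (B : Matrix (Fin m) (Fin n) ℝ) (hB : B ≠ 0)
    (p : ℝ) (hp : 0 < p) (C : Set (Fin n → ℝ)) (hC : IsCompact C) (hne : C.Nonempty)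
    (kstar : ℕ) (hk1 : 1 ≤ kstar)
    (hmin : IsLeast {k : ℕ | ∃ x ∈ C, l0 (B.mulVec x) = k} kstar)
    (τ : ℝ)
    (hτ : τ = sInf {r : ℝ | ∃ x ∈ C, r = kthLargest (fun i => |B.mulVec x i|) kstar}) :
    ∀ γ : ℝ, 1 / τ ^ p < γ →
      IsLeast {r : ℝ | ∃ x ∈ C, r = ∑ i, min (γ * |B.mulVec x i| ^ p) 1} (kstar : ℝ) ∧
      {x ∈ C | l0 (B.mulVec x) = kstar}
        = {x ∈ C | ∑ i, min (γ * |B.mulVec x i| ^ p) 1 = (kstar : ℝ)} :=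
  exact_approx_compact_general n m B p hp C hC kstar hk1 hmin τ hτ
end

section
/- Let Φ(x) = φ(x) + λ‖Bx‖₀ with φ proper, lsc, asymptotically level stable and bounded below. The marginal function F(λ) = min_x Φ(x), defined for λ > 0, is a pointwise minimum of finitely many affine functions λ ↦ ρ_i + λ s_i with 0 ≤ s_L < … < s_0 ≤ m and ρ_0 < … < ρ_L; consequently F is continuous, piecewise linear, nondecreasing and concave on (0, +∞). -/
open Filter Topology

/-!
Write `R k` for the infimum of `φ` over `{x | ‖Bx‖₀ ≤ k}`. Splitting the infimum defining `F` by
the value `k = ‖Bx‖₀ ∈ {0, …, m}` gives `F(λ) = min_k (R k + λ k)`, and a level `k` may be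
discarded as soon as some `j < k` has `R j ≤ R k`, since then `R j + λ j ≤ R k + λ k` for `λ > 0`.
The surviving levels are the finite strict records of `R`: listed in decreasing order, the levels
`s_i` decrease strictly and the values `ρ_i = R s_i` increase strictly.
-/

open Finset

theorem l0_le {m : ℕ} (y : Fin m → ℝ) : l0 y ≤ m :=
  (card_filter_le _ _).trans_eq (card_fin m)

theorem EReal.iInf_add_coe {ι : Sort*} (u : ι → EReal) (c : ℝ) :
    (⨅ i, u i) + c = ⨅ i, (u i + c) := by
  have hcont : ∀ y : EReal, ContinuousAt (· + (c : EReal)) y := fun y =>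
    (EReal.continuousAt_add (.inr (EReal.coe_ne_bot c)) (.inr (EReal.coe_ne_top c))).comp
      (Continuous.prodMk_left (c : EReal)).continuousAt
  exact Monotone.map_iInf_of_continuousAt (hcont _) (fun _ _ h => add_le_add h le_rfl)
    (EReal.top_add_coe c)

theorem Finset.exists_strictAnti_fin_enum {α : Type*} [LinearOrder α] (K : Finset α)
    (hK : K.Nonempty) : ∃ (L : ℕ) (e : Fin (L + 1) → α), StrictAnti e ∧ Set.range e = K := by
  have hcard : K.card = K.card - 1 + 1 := (Nat.succ_pred_eq_of_pos hK.card_pos).symm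
  refine ⟨K.card - 1, K.orderEmbOfFin hcard ∘ Fin.rev,
    (K.orderEmbOfFin hcard).strictMono.comp_strictAnti Fin.rev_strictAnti, ?_⟩
  rw [Fin.rev_surjective.range_comp, range_orderEmbOfFin]

section MinOfAffine

variable {ι : Type*} (s : Finset ι) (hs : s.Nonempty) (a b : ι → ℝ)

theorem continuous_inf'_affine : Continuous fun t : ℝ => s.inf' hs fun i => a i + t * b i :=
  Continuous.finset_inf'_apply hs fun _ _ => by fun_prop

theorem monotone_inf'_affine (hb : ∀ i ∈ s, 0 ≤ b i) :
    Monotone fun t : ℝ => s.inf' hs fun i => a i + t * b i := fun t u htu =>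
  le_inf' _ _ fun i hi => (inf'_le _ hi).trans (by gcongr; exact hb i hi)

theorem concaveOn_inf'_affine :
    ConcaveOn ℝ Set.univ fun t : ℝ => s.inf' hs fun i => a i + t * b i := by
  simp_rw [← Finset.inf'_apply hs (fun i (t : ℝ) => a i + t * b i)]
  refine inf'_induction hs _ (p := ConcaveOn ℝ Set.univ) (fun _ hf _ hg => hf.inf hg) fun i _ => ?_
  refine ⟨convex_univ, fun x _ y _ p q _ _ hpq => le_of_eq ?_⟩
  simp only [smul_eq_mul]
  linear_combination a i * hpq

end MinOfAffine

section Records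

variable {β : Type*} [LinearOrder β] [OrderTop β] (R : ℕ → β) (m : ℕ)

def finiteStrictRecords : Finset ℕ :=
  (range (m + 1)).filter fun k => R k ≠ ⊤ ∧ ∀ j < k, R k < R j

variable {R m}

theorem le_of_mem_finiteStrictRecords {k : ℕ} (hk : k ∈ finiteStrictRecords R m) :
    k ≤ m ∧ R k ≠ ⊤ := by
  simp only [finiteStrictRecords, mem_filter, mem_range] at hk
  exact ⟨Nat.lt_succ_iff.1 hk.1, hk.2.1⟩

theorem lt_of_mem_finiteStrictRecords {j k : ℕ} (hk : k ∈ finiteStrictRecords R m) (hjk : j < k) :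
    R k < R j := by
  simp only [finiteStrictRecords, mem_filter] at hk
  exact hk.2.2 j hjk

theorem exists_mem_finiteStrictRecords_le {k : ℕ} (hkm : k ≤ m) (hk : R k ≠ ⊤) :
    ∃ j ∈ finiteStrictRecords R m, j ≤ k ∧ R j ≤ R k := by
  classical
  have hex : ∃ j, R j ≤ R k := ⟨k, le_rfl⟩
  have hjk : Nat.find hex ≤ k := Nat.find_min' hex le_rfl
  refine ⟨Nat.find hex, ?_, hjk, Nat.find_spec hex⟩
  simp only [finiteStrictRecords, mem_filter, mem_range]
  refine ⟨by omega, ne_top_of_le_ne_top hk (Nat.find_spec hex), fun i hi => ?_⟩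
  exact (Nat.find_spec hex).trans_lt (not_le.1 (Nat.find_min hex hi))

end Records

section MarginalFunction

variable {α : Type*} (f : α → EReal) (g : α → ℕ)

noncomputable def constrainedInf (k : ℕ) : EReal := ⨅ x : {x // g x ≤ k}, f x

variable {f g}

theorem constrainedInf_le {x : α} {k : ℕ} (h : g x ≤ k) : constrainedInf f g k ≤ f x :=
  iInf_le (fun x : {x // g x ≤ k} => f x) ⟨x, h⟩

theorem iInf_add_mul_le_constrainedInf_add {lam : ℝ} (hlam : 0 ≤ lam) (k : ℕ) :
    ⨅ x, f x + ((lam * g x : ℝ) : EReal) ≤ constrainedInf f g k + ((lam * k : ℝ) : EReal) := by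
  rw [constrainedInf, EReal.iInf_add_coe]
  refine le_iInf fun x => (iInf_le _ x.1).trans ?_
  gcongr
  exact_mod_cast x.2

theorem iInf_add_mul_eq_inf' {ι : Type*} [Fintype ι] [Nonempty ι] (s : ι → ℕ) (ρ : ι → ℝ)
    (hρ : ∀ i, (ρ i : EReal) = constrainedInf f g (s i))
    (hcover : ∀ x, f x ≠ ⊤ → ∃ i, s i ≤ g x ∧ constrainedInf f g (s i) ≤ f x)
    {lam : ℝ} (hlam : 0 ≤ lam) :
    ⨅ x, f x + ((lam * g x : ℝ) : EReal) =
      ((univ.inf' univ_nonempty fun i => ρ i + lam * s i : ℝ) : EReal) := by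
  apply le_antisymm
  · obtain ⟨i, -, hi⟩ := exists_mem_eq_inf' univ_nonempty fun i => ρ i + lam * s i
    rw [hi, EReal.coe_add, hρ]
    exact iInf_add_mul_le_constrainedInf_add hlam (s i)
  · refine le_iInf fun x => ?_
    rcases eq_or_ne (f x) ⊤ with hx | hx
    · rw [hx, EReal.top_add_coe]
      exact le_top
    obtain ⟨i, hsi, hRi⟩ := hcover x hx
    calc ((univ.inf' univ_nonempty fun i => ρ i + lam * s i : ℝ) : EReal)
        ≤ ((ρ i + lam * s i : ℝ) : EReal) := by exact_mod_cast inf'_le _ (mem_univ i)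
      _ = constrainedInf f g (s i) + ((lam * s i : ℝ) : EReal) := by rw [EReal.coe_add, hρ]
      _ ≤ f x + ((lam * g x : ℝ) : EReal) := by gcongr

theorem exists_mem_finiteStrictRecords_constrainedInf_le {m : ℕ} (hg : ∀ x, g x ≤ m) {x : α}
    (hx : f x ≠ ⊤) :
    ∃ j ∈ finiteStrictRecords (constrainedInf f g) m, j ≤ g x ∧ constrainedInf f g j ≤ f x := by
  have hRx : constrainedInf f g (g x) ≤ f x := constrainedInf_le le_rfl
  obtain ⟨j, hj, hjx, hRj⟩ :=
    exists_mem_finiteStrictRecords_le (hg x) (ne_top_of_le_ne_top hx hRx)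
  exact ⟨j, hj, hjx, hRj.trans hRx⟩

end MarginalFunction

theorem marginal_function_piecewise_linear_general (n m : ℕ) (φ : (Fin n → ℝ) → EReal)
    (hproper : ∃ x, φ x ≠ ⊤)
    (hbdd : ∃ c : ℝ, ∀ x, (c : EReal) ≤ φ x)
    (B : Matrix (Fin m) (Fin n) ℝ) :
    ∃ (L : ℕ) (s ρ : Fin (L + 1) → ℝ),
      StrictAnti s ∧ StrictMono ρ ∧ 0 ≤ s (Fin.last L) ∧ s 0 ≤ m ∧
      (∀ lam : ℝ, 0 < lam →
        (⨅ x : Fin n → ℝ, φ x + ((lam * (l0 (B.mulVec x) : ℝ) : ℝ) : EReal))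
          = ((Finset.univ.inf' Finset.univ_nonempty
              (fun i : Fin (L + 1) => ρ i + lam * s i) : ℝ) : EReal)) ∧
      ContinuousOn (fun lam : ℝ => Finset.univ.inf' Finset.univ_nonempty
          (fun i : Fin (L + 1) => ρ i + lam * s i)) (Set.Ioi 0) ∧
      MonotoneOn (fun lam : ℝ => Finset.univ.inf' Finset.univ_nonempty
          (fun i : Fin (L + 1) => ρ i + lam * s i)) (Set.Ioi 0) ∧
      ConcaveOn ℝ (Set.Ioi 0) (fun lam : ℝ => Finset.univ.inf' Finset.univ_nonempty
          (fun i : Fin (L + 1) => ρ i + lam * s i)) := by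
  obtain ⟨c, hc⟩ := hbdd
  obtain ⟨x₀, hx₀⟩ := hproper
  set g : (Fin n → ℝ) → ℕ := fun x => l0 (B.mulVec x)
  set R := constrainedInf φ g
  have hcover {x} (hx : φ x ≠ ⊤) :=
    exists_mem_finiteStrictRecords_constrainedInf_le (g := g) (fun _ => l0_le _) hx
  obtain ⟨j₀, hj₀, -⟩ := hcover hx₀
  obtain ⟨L, e, he, hrange⟩ := (finiteStrictRecords R m).exists_strictAnti_fin_enum ⟨j₀, hj₀⟩
  have hmem (i) : e i ∈ finiteStrictRecords R m := by
    rw [← mem_coe, ← hrange]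
    exact ⟨i, rfl⟩
  have hρ : ∀ i, ((R (e i)).toReal : EReal) = R (e i) := fun i =>
    EReal.coe_toReal (le_of_mem_finiteStrictRecords (hmem i)).2
      (ne_bot_of_le_ne_bot (EReal.coe_ne_bot c) (le_iInf fun x => hc x))
  refine ⟨L, fun i => e i, fun i => (R (e i)).toReal, fun i j hij => Nat.cast_lt.2 (he hij),
    fun i j hij => EReal.coe_lt_coe_iff.1 ?_, Nat.cast_nonneg _,
    Nat.cast_le.2 (le_of_mem_finiteStrictRecords (hmem 0)).1, fun lam hlam => ?_,
    (continuous_inf'_affine _ _ _ _).continuousOn,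
    (monotone_inf'_affine _ _ _ _ fun i _ => Nat.cast_nonneg _).monotoneOn _,
    (concaveOn_inf'_affine _ _ _ _).subset (Set.subset_univ _) (convex_Ioi 0)⟩
  · rw [hρ, hρ]
    exact lt_of_mem_finiteStrictRecords (hmem i) (he hij)
  · refine iInf_add_mul_eq_inf' e _ hρ (fun x hx => ?_) hlam.le
    obtain ⟨j, hj, hjx, hRj⟩ := hcover hx
    obtain ⟨i, rfl⟩ : j ∈ Set.range e := hrange ▸ hj
    exact ⟨i, hjx, hRj⟩

/-- The marginal function `F(λ) = inf_x (φ(x) + λ‖Bx‖₀)` is, on `(0,∞)`, a pointwise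
minimum of finitely many affine functions `λ ↦ ρ_i + λ s_i` with
`0 ≤ s_L < ⋯ < s_0 ≤ m` and `ρ_0 < ⋯ < ρ_L`; consequently it is continuous, piecewise
linear, nondecreasing and concave on `(0,∞)`. -/
theorem marginal_function_piecewise_linear (n m : ℕ) (φ : (Fin n → ℝ) → EReal)
    (hproper : ∃ x, φ x ≠ ⊤) (hnb : ∀ x, φ x ≠ ⊥)
    (hlsc : LowerSemicontinuous φ) (hals : ALS φ)
    (hbdd : ∃ c : ℝ, ∀ x, (c : EReal) ≤ φ x)
    (B : Matrix (Fin m) (Fin n) ℝ) :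
    ∃ (L : ℕ) (s ρ : Fin (L + 1) → ℝ),
      StrictAnti s ∧ StrictMono ρ ∧ 0 ≤ s (Fin.last L) ∧ s 0 ≤ m ∧
      (∀ lam : ℝ, 0 < lam →
        (⨅ x : Fin n → ℝ, φ x + ((lam * (l0 (B.mulVec x) : ℝ) : ℝ) : EReal))
          = ((Finset.univ.inf' Finset.univ_nonempty
              (fun i : Fin (L + 1) => ρ i + lam * s i) : ℝ) : EReal)) ∧
      ContinuousOn (fun lam : ℝ => Finset.univ.inf' Finset.univ_nonempty
          (fun i : Fin (L + 1) => ρ i + lam * s i)) (Set.Ioi 0) ∧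
      MonotoneOn (fun lam : ℝ => Finset.univ.inf' Finset.univ_nonempty
          (fun i : Fin (L + 1) => ρ i + lam * s i)) (Set.Ioi 0) ∧
      ConcaveOn ℝ (Set.Ioi 0) (fun lam : ℝ => Finset.univ.inf' Finset.univ_nonempty
          (fun i : Fin (L + 1) => ρ i + lam * s i)) :=
  marginal_function_piecewise_linear_general n m φ hproper hbdd B
end
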